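/- arXiv:2605.12277 — 2 statements merged into one kernel-verified Lean document; each statement's English description precedes it below -/
import Mathlib

section
/- Let r > 0, y ∈ ℝ², and let v be a continuous function on the closed disk cl B(y,r) ⊂ ℝ² that is smooth in the interior with −Δv = 1, and nonnegative on cl B(y,r). Define w(z) = (r² − |z−y|²)/4. Suppose there is a point z₀ with |z₀ − y| = r such that v(z₀) = 0, v is differentiable at z₀, and |∇v(z₀)| ≤ 1. If v ≥ w on the boundary circle {|z − y| = r}, then r ≤ 2. -/
open MeasureTheory Real Set
open scoped RealInnerProductSpace

noncomputable section

abbrev R2 : Type := EuclideanSpace ℝ (Fin 2)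

def e (i : Fin 2) : R2 := EuclideanSpace.single i 1

/-- partial derivative in direction `e i` -/
def pd (i : Fin 2) (u : R2 → ℝ) (x : R2) : ℝ := fderiv ℝ u x (e i)

/-- Euclidean Laplacian on `ℝ²` -/
def lap (u : R2 → ℝ) (x : R2) : ℝ := ∑ i, pd i (pd i u) x

/-- Euclidean gradient on `ℝ²` -/
def grad (u : R2 → ℝ) (x : R2) : R2 := ∑ i, pd i u x • e i

/-- unit circle parametrization -/
def circ (θ : ℝ) : R2 := Real.cos θ • e 0 + Real.sin θ • e 1

open Filter Topology

/-- If a function has a local minimum at `0` and its derivative has a derivative `L` at `0`,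
then `L ≥ 0`. -/
lemma second_deriv_nonneg_of_isLocalMin {f : ℝ → ℝ} {L : ℝ}
    (hd : ∀ᶠ t in 𝓝 (0:ℝ), DifferentiableAt ℝ f t)
    (hL : HasDerivAt (deriv f) L 0) (hmin : IsLocalMin f 0) : 0 ≤ L := by
  by_contra hneg
  push_neg at hneg
  have hd0 : deriv f 0 = 0 := hmin.deriv_eq_zero
  have hslope : Tendsto (slope (deriv f) 0) (𝓝[≠] (0:ℝ)) (𝓝 L) :=
    hasDerivAt_iff_tendsto_slope.1 hL
  have hslope' : Tendsto (slope (deriv f) 0) (𝓝[>] (0:ℝ)) (𝓝 L) :=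
    hslope.mono_left (nhdsWithin_mono _ (fun t ht => ne_of_gt ht))
  have hEv : ∀ᶠ t in 𝓝[>] (0:ℝ),
      deriv f t < 0 ∧ DifferentiableAt ℝ f t ∧ f 0 ≤ f t := by
    have h1 : ∀ᶠ t in 𝓝[>] (0:ℝ), slope (deriv f) 0 t < 0 :=
      hslope' (Iio_mem_nhds hneg)
    filter_upwards [h1, (hd.and hmin).filter_mono nhdsWithin_le_nhds,
      self_mem_nhdsWithin] with t h1 h2 ht
    refine ⟨?_, h2.1, h2.2⟩
    have : deriv f t / t < 0 := by simpa [slope_def_field, hd0] using h1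
    rcases div_neg_iff.1 this with h | h
    · exact absurd ht (not_lt.2 h.2.le)
    · exact h.1
  obtain ⟨s, hs, hsub⟩ := Filter.eventually_iff_exists_mem.1 hEv
  obtain ⟨u, hu, hIoc⟩ := mem_nhdsGT_iff_exists_Ioc_subset.1 hs
  have hu0 : (0:ℝ) < u := hu
  have hprop : ∀ t ∈ Ioc (0:ℝ) u, deriv f t < 0 ∧ DifferentiableAt ℝ f t ∧ f 0 ≤ f t :=
    fun t ht => hsub t (hIoc ht)
  have hcont : ContinuousOn f (Icc 0 u) := by
    intro t ht
    rcases eq_or_lt_of_le ht.1 with h | h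
    · subst h; exact hd.self_of_nhds.continuousAt.continuousWithinAt
    · exact ((hprop t ⟨h, ht.2⟩).2.1.continuousAt).continuousWithinAt
  have hdiff : ∀ t ∈ Ioo (0:ℝ) u, DifferentiableAt ℝ f t :=
    fun t ht => (hprop t ⟨ht.1, ht.2.le⟩).2.1
  obtain ⟨c, hc, hceq⟩ := exists_deriv_eq_slope f hu0 hcont
    (fun t ht => (hdiff t ht).differentiableWithinAt)
  have h1 : deriv f c < 0 := (hprop c ⟨hc.1, hc.2.le⟩).1
  have h2 : 0 ≤ (f u - f 0) / (u - 0) :=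
    div_nonneg (sub_nonneg.2 (hprop u ⟨hu0, le_rfl⟩).2.2) (by linarith)
  rw [hceq] at h1; linarith

lemma pd_differentiableAt {u : R2 → ℝ} {s : Set R2} (hs : IsOpen s)
    (hu : ContDiffOn ℝ (⊤ : ℕ∞) u s) {x : R2} (hx : x ∈ s) (i : Fin 2) :
    DifferentiableAt ℝ (pd i u) x := by
  have h1 : ContDiffAt ℝ 1 (fderiv ℝ u) x :=
    (hu.contDiffAt (hs.mem_nhds hx)).fderiv_right (WithTop.coe_le_coe.2 le_top)
  have : pd i u = (fun L : R2 →L[ℝ] ℝ => L (e i)) ∘ fderiv ℝ u := rfl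
  rw [this]
  exact ((ContinuousLinearMap.apply ℝ ℝ (e i)).differentiableAt).comp x
    (h1.differentiableAt (by norm_num))

lemma line_deriv {u : R2 → ℝ} {s : Set R2} (hs : IsOpen s) (hu : ContDiffOn ℝ (⊤ : ℕ∞) u s)
    {x : R2} (hx : x ∈ s) (i : Fin 2) :
    (∀ᶠ t in 𝓝 (0:ℝ), DifferentiableAt ℝ (fun t : ℝ => u (x + t • e i)) t) ∧
    HasDerivAt (deriv (fun t : ℝ => u (x + t • e i))) (pd i (pd i u) x) 0 := by
  set g : ℝ → R2 := fun t => x + t • e i with hg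
  have hgc : Continuous g := by fun_prop
  have hmem : ∀ᶠ t in 𝓝 (0:ℝ), g t ∈ s := by
    have : g 0 = x := by simp [hg]
    exact hgc.continuousAt (by rw [this] at *; exact hs.mem_nhds hx)
  have hgd : ∀ t : ℝ, HasDerivAt g (e i) t := fun t => by
    simpa [hg] using ((hasDerivAt_id t).smul_const (e i)).const_add x
  have hud : ∀ᶠ t in 𝓝 (0:ℝ), DifferentiableAt ℝ u (g t) := by
    filter_upwards [hmem] with t ht
    exact (hu.contDiffAt (hs.mem_nhds ht)).differentiableAt (by simp)
  constructor
  · filter_upwards [hud] with t ht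
    exact ht.comp t (hgd t).differentiableAt
  · have hderiv : ∀ᶠ t in 𝓝 (0:ℝ),
        deriv (fun t : ℝ => u (x + t • e i)) t = pd i u (g t) := by
      filter_upwards [hud] with t ht
      exact ((ht.hasFDerivAt.comp_hasDerivAt t (hgd t))).deriv
    have hpdu : DifferentiableAt ℝ (pd i u) x := pd_differentiableAt hs hu hx i
    have hg0 : g 0 = x := by simp [hg]
    have h2 : HasDerivAt (fun t => pd i u (g t)) (pd i (pd i u) x) 0 := by
      have h0 : HasFDerivAt (pd i u) (fderiv ℝ (pd i u) x) (g 0) := by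
        rw [hg0]; exact hpdu.hasFDerivAt
      have := h0.comp_hasDerivAt 0 (hgd 0)
      exact this
    exact h2.congr_of_eventuallyEq (hderiv.mono fun t ht => ht)

/-- Minimum principle for strictly superharmonic functions on a disk. -/
lemma min_principle (r : ℝ) (hr : 0 < r) (y : R2) (h : R2 → ℝ)
    (hc : ContinuousOn h (Metric.closedBall y r))
    (hreg : ContDiffOn ℝ (⊤ : ℕ∞) h (Metric.ball y r))
    (hlap : ∀ x ∈ Metric.ball y r, lap h x < 0)
    (hbd : ∀ z : R2, ‖z - y‖ = r → 0 ≤ h z) :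
    ∀ x ∈ Metric.closedBall y r, 0 ≤ h x := by
  obtain ⟨x₀, hx₀, hminOn⟩ := (isCompact_closedBall y r).exists_isMinOn
    (Metric.nonempty_closedBall.2 hr.le) hc
  have key : 0 ≤ h x₀ := by
    by_cases hin : x₀ ∈ Metric.ball y r
    · exfalso
      have hloc : IsLocalMin h x₀ := hminOn.isLocalMin
        (Filter.mem_of_superset (Metric.isOpen_ball.mem_nhds hin)
          Metric.ball_subset_closedBall)
      have hcomp : ∀ i : Fin 2, 0 ≤ pd i (pd i h) x₀ := by
        intro i
        obtain ⟨hd, hL⟩ := line_deriv Metric.isOpen_ball hreg hin i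
        refine second_deriv_nonneg_of_isLocalMin hd hL ?_
        have hgc : Continuous (fun t : ℝ => x₀ + t • e i) := by fun_prop
        have ht : Tendsto (fun t : ℝ => x₀ + t • e i) (𝓝 0) (𝓝 x₀) := by
          simpa using hgc.tendsto 0
        have := ht.eventually hloc
        simpa [IsLocalMin, IsMinFilter] using this
      have : 0 ≤ lap h x₀ := Finset.sum_nonneg fun i _ => hcomp i
      linarith [hlap x₀ hin]
    · refine hbd x₀ ?_
      have h1 : dist x₀ y ≤ r := Metric.mem_closedBall.1 hx₀
      have h2 : ¬ dist x₀ y < r := fun hlt => hin (Metric.mem_ball.2 hlt)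
      rw [dist_eq_norm] at *
      linarith [not_lt.1 h2]
  exact fun x hx => le_trans key (hminOn hx)

/-- Comparison with the paraboloid bounds the inradius. -/
theorem stmt8 (r : ℝ) (hr : 0 < r) (y : R2) (v : R2 → ℝ)
    (hcont : ContinuousOn v (Metric.closedBall y r))
    (hreg : ContDiffOn ℝ (⊤ : ℕ∞) v (Metric.ball y r))
    (hpde : ∀ x ∈ Metric.ball y r, lap v x = -1)
    (hnonneg : ∀ x ∈ Metric.closedBall y r, 0 ≤ v x)
    (z₀ : R2) (hz₀ : ‖z₀ - y‖ = r) (hv0 : v z₀ = 0)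
    (hdiff : DifferentiableAt ℝ v z₀) (hgrad : ‖grad v z₀‖ ≤ 1)
    (hcomp : ∀ z : R2, ‖z - y‖ = r → (r ^ 2 - ‖z - y‖ ^ 2) / 4 ≤ v z) :
    r ≤ 2 := by
  classical
  set W : R2 → ℝ := fun z => (4:ℝ)⁻¹ * (r ^ 2 - ‖z - y‖ ^ 2) with hWdef
  -- derivative of W
  have hW : ∀ z : R2, HasFDerivAt W
      ((4:ℝ)⁻¹ • ((0 : R2 →L[ℝ] ℝ) -
        2 • ((innerSL ℝ (z - y)).comp (ContinuousLinearMap.id ℝ R2)))) z := by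
    intro z
    have h1 : HasFDerivAt (fun z : R2 => ‖z - y‖ ^ 2)
        (2 • ((innerSL ℝ (z - y)).comp (ContinuousLinearMap.id ℝ R2))) z := by
      have := ((hasFDerivAt_id z).sub_const y).norm_sq
      simpa using this
    exact ((hasFDerivAt_const (r ^ 2) z).sub h1).const_mul ((4:ℝ)⁻¹)
  have pdW : ∀ (i : Fin 2), pd i W = fun z : R2 =>
      (-(2:ℝ)⁻¹) * ((EuclideanSpace.proj i) z - y i) := by
    intro i
    funext z
    rw [pd, (hW z).fderiv]
    simp [e, EuclideanSpace.inner_single_right, PiLp.sub_apply]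
    fin_cases i <;> simp <;> ring
  have hpdWd : ∀ (i : Fin 2) (z : R2),
      HasFDerivAt (fun z : R2 => (-(2:ℝ)⁻¹) * ((EuclideanSpace.proj i) z - y i))
        ((-(2:ℝ)⁻¹) • (EuclideanSpace.proj i (𝕜 := ℝ))) z := by
    intro i z
    have := ((EuclideanSpace.proj i (𝕜 := ℝ)).hasFDerivAt (x := z)).sub_const (y i)
    simpa using this.const_mul ((-(2:ℝ)⁻¹))
  have hW2 : ∀ (i : Fin 2) (z : R2), pd i (pd i W) z = -(2:ℝ)⁻¹ := by
    intro i z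
    rw [pd, pdW i, (hpdWd i z).fderiv]
    simp [e, EuclideanSpace.single_apply]
  have lapW : ∀ z : R2, lap W z = -1 := by
    intro z
    simp only [lap, hW2, Fin.sum_univ_two]
    norm_num
  have hWc : ContDiff ℝ (⊤ : ℕ∞) W :=
    contDiff_const.mul (contDiff_const.sub
      ((contDiff_norm_sq ℝ).comp (contDiff_id.sub contDiff_const)))
  -- comparison with c • W for any 0 < c < 1
  have hcomp2 : ∀ c : ℝ, 0 < c → c < 1 → ∀ x ∈ Metric.closedBall y r,
      c * W x ≤ v x := by
    intro c hc0 hc1 x hx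
    set h : R2 → ℝ := fun z => v z - c * W z with hh
    have pdh : ∀ i : Fin 2, ∀ x ∈ Metric.ball y r,
        pd i h x = pd i v x - c * pd i W x := by
      intro i x hx
      have hv : DifferentiableAt ℝ v x :=
        (hreg.contDiffAt (Metric.isOpen_ball.mem_nhds hx)).differentiableAt (by simp)
      have hw : DifferentiableAt ℝ W x := (hW x).differentiableAt
      rw [pd, hh]
      rw [fderiv_fun_sub hv (hw.const_mul c), fderiv_const_mul hw c]
      simp [pd]
    have pdh2 : ∀ i : Fin 2, ∀ x ∈ Metric.ball y r,
        pd i (pd i h) x = pd i (pd i v) x - c * pd i (pd i W) x := by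
      intro i x hx
      have heq : pd i h =ᶠ[𝓝 x] fun z => pd i v z - c * pd i W z :=
        Filter.eventuallyEq_of_mem (Metric.isOpen_ball.mem_nhds hx) (pdh i)
      have hdv : DifferentiableAt ℝ (pd i v) x :=
        pd_differentiableAt Metric.isOpen_ball hreg hx i
      have hdw : DifferentiableAt ℝ (pd i W) x := by
        rw [pdW i]; exact (hpdWd i x).differentiableAt
      rw [pd, heq.fderiv_eq, fderiv_fun_sub hdv (hdw.const_mul c), fderiv_const_mul hdw c]
      simp [pd]
    have hlaph : ∀ x ∈ Metric.ball y r, lap h x < 0 := by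
      intro x hx
      have : lap h x = lap v x - c * lap W x := by
        simp only [lap, Fin.sum_univ_two, pdh2 _ x hx]
        ring
      rw [this, hpde x hx, lapW x]
      linarith
    have hbd : ∀ z : R2, ‖z - y‖ = r → 0 ≤ h z := by
      intro z hz
      have hW0 : W z = 0 := by rw [hWdef]; simp [hz]
      have hzmem : z ∈ Metric.closedBall y r := by
        rw [Metric.mem_closedBall, dist_eq_norm, hz]
      simp only [hh, hW0, mul_zero, sub_zero]
      exact hnonneg z hzmem
    have := min_principle r hr y h
      (hcont.sub ((continuous_const.mul hWc.continuous).continuousOn))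
      (hreg.sub ((contDiff_const.mul hWc).contDiffOn))
      hlaph hbd x hx
    simpa [hh, sub_nonneg] using this
  -- the direction towards the center
  set n : R2 := r⁻¹ • (y - z₀) with hn
  have hnorm : ‖n‖ = 1 := by
    rw [hn, norm_smul, norm_sub_rev, hz₀]
    simp [abs_of_pos hr, inv_mul_cancel₀ hr.ne']
  have hline : ∀ t : ℝ, 0 ≤ t → t ≤ r → ‖z₀ + t • n - y‖ = r - t := by
    intro t ht0 htr
    have : z₀ + t • n - y = (1 - t / r) • (z₀ - y) := by
      rw [hn, smul_smul]
      rw [sub_smul, one_smul]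
      rw [smul_sub]
      module
    rw [this, norm_smul, hz₀, Real.norm_eq_abs, abs_of_nonneg (by
      have := div_le_one_of_le₀ htr hr.le
      linarith)]
    field_simp
  set φ : ℝ → ℝ := fun t => v (z₀ + t • n) with hφ
  have hφd : HasDerivAt φ (fderiv ℝ v z₀ n) 0 := by
    have hgd : HasDerivAt (fun t : ℝ => z₀ + t • n) n 0 := by
      simpa using ((hasDerivAt_id (0:ℝ)).smul_const n).const_add z₀
    have h0 : HasFDerivAt v (fderiv ℝ v z₀) (z₀ + (0:ℝ) • n) := by
      simpa using hdiff.hasFDerivAt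
    exact h0.comp_hasDerivAt 0 hgd
  set L : ℝ := fderiv ℝ v z₀ n with hL
  -- L ≤ 1
  have hLgrad : L = ⟪grad v z₀, n⟫ := by
    have hb : n = n 0 • e 0 + n 1 • e 1 := by
      ext j; fin_cases j <;> simp [e, EuclideanSpace.single_apply]
    have h1 : L = n 0 * pd 0 v z₀ + n 1 * pd 1 v z₀ := by
      have : L = fderiv ℝ v z₀ (n 0 • e 0 + n 1 • e 1) := by rw [hL, ← hb]
      rw [this, ContinuousLinearMap.map_add, ContinuousLinearMap.map_smul, ContinuousLinearMap.map_smul]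
      simp [pd]
    rw [h1, grad]
    simp only [Fin.sum_univ_two, inner_add_left, real_inner_smul_left, e,
      EuclideanSpace.inner_single_left, starRingEnd_apply, star_one, one_mul]
    ring
  have hL1 : L ≤ 1 := by
    rw [hLgrad]
    calc ⟪grad v z₀, n⟫ ≤ ‖grad v z₀‖ * ‖n‖ := real_inner_le_norm _ _
    _ ≤ 1 := by rw [hnorm]; simpa using hgrad
  -- slope bound
  have hslope : Filter.Tendsto (fun t => φ t / t) (𝓝[>] (0:ℝ)) (𝓝 L) := by
    have h1 : Filter.Tendsto (slope φ 0) (𝓝[≠] (0:ℝ)) (𝓝 L) :=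
      hasDerivAt_iff_tendsto_slope.1 hφd
    have h2 := h1.mono_left (nhdsWithin_mono _ (fun t (ht : t ∈ Ioi 0) => ne_of_gt ht))
    refine h2.congr' ?_
    filter_upwards [self_mem_nhdsWithin] with t ht
    have hφ0 : φ 0 = 0 := by simp [hφ, hv0]
    simp [slope_def_field, hφ0, div_eq_mul_inv, mul_comm]
  have hcr : ∀ c : ℝ, 0 < c → c < 1 → c * r ≤ 2 := by
    intro c hc0 hc1
    have hlb : ∀ᶠ t in 𝓝[>] (0:ℝ), c * (2 * r - t) / 4 ≤ φ t / t := by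
      filter_upwards [Ioo_mem_nhdsGT_of_mem (Set.left_mem_Ico.2 hr)] with t ht
      have h1 : ‖z₀ + t • n - y‖ = r - t := hline t ht.1.le ht.2.le
      have hmem : z₀ + t • n ∈ Metric.closedBall y r := by
        rw [Metric.mem_closedBall, dist_eq_norm, h1]; linarith [ht.1]
      have h2 := hcomp2 c hc0 hc1 _ hmem
      rw [hWdef] at h2
      simp only [h1] at h2
      have hφt : c * ((4:ℝ)⁻¹ * (r ^ 2 - (r - t) ^ 2)) ≤ φ t := h2
      have hnum : c * (2 * r - t) / 4 * t ≤ φ t := by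
        calc c * (2 * r - t) / 4 * t = c * ((4:ℝ)⁻¹ * (r ^ 2 - (r - t) ^ 2)) := by ring
        _ ≤ φ t := hφt
      rw [le_div_iff₀ ht.1]
      exact hnum
    have hgten : Filter.Tendsto (fun t : ℝ => c * (2 * r - t) / 4) (𝓝[>] (0:ℝ))
        (𝓝 (c * (2 * r - 0) / 4)) := by
      exact ((by fun_prop : Continuous fun t : ℝ => c * (2 * r - t) / 4).tendsto 0).mono_left
        nhdsWithin_le_nhds
    have hfin : c * (2 * r - 0) / 4 ≤ L := le_of_tendsto_of_tendsto hgten hslope hlb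
    linarith
  by_contra hr2
  push_neg at hr2
  obtain ⟨c, hc1, hc2⟩ := exists_between ((div_lt_one (by linarith : (0:ℝ) < r)).2
    (by linarith) : 2 / r < 1)
  have hc0 : 0 < c := lt_trans (div_pos (by norm_num) (by linarith)) hc1
  have := hcr c hc0 hc2
  have : 2 < c * r := by
    rw [div_lt_iff₀ (by linarith : (0:ℝ) < r)] at hc1
    linarith
  linarith
end
end

section
/- Let d > 0, y ∈ ℝ², and let v be a nonnegative harmonic function on the open disk B(y,d) ⊂ ℝ², continuous on the closed disk. Suppose there is z₀ with |z₀ − y| = d such that v(z₀) = 0, v is differentiable at z₀, and |∇v(z₀)| ≤ 1. Then v(y) ≤ 3d. -/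
open MeasureTheory Real Set
open scoped RealInnerProductSpace

noncomputable section

/-!
Put `x t` on the radius from `z₀` to `y` at distance `t` from `z₀`. Harnack's inequality on
`B(y, d)` gives `t · v y ≤ (2d - t) · v (x t)`, while `v z₀ = 0` and `|∇v z₀| ≤ 1` give
`v (x t) ≤ 3t/2` for small `t`; hence `v y ≤ 3d`. Harnack's inequality itself comes from the
Poisson formula on `ℂ`, the Poisson kernel of a disc of radius `r` being at least
`(r - |w|)/(r + |w|)`, and it is transported to `ℝ²` by a linear isometry.
-/

open InnerProductSpace Laplacian Metric Filter Topology

namespace InnerProductSpace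

section Isometry

variable {E F G : Type*} [NormedAddCommGroup E] [InnerProductSpace ℝ E] [FiniteDimensional ℝ E]
  [NormedAddCommGroup F] [InnerProductSpace ℝ F] [FiniteDimensional ℝ F]
  [NormedAddCommGroup G] [NormedSpace ℝ G]

theorem laplacian_comp_linearIsometryEquiv (L : E ≃ₗᵢ[ℝ] F) (f : F → G) (x : E) :
    Δ (f ∘ L) x = Δ f (L x) := by
  let b := stdOrthonormalBasis ℝ E
  have hcomp : ∀ i, iteratedFDeriv ℝ 2 (f ∘ L) x ![b i, b i] =
      iteratedFDeriv ℝ 2 f (L x) ![(b.map L) i, (b.map L) i] := by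
    intro i
    have h := L.toContinuousLinearEquiv.iteratedFDerivWithin_comp_right f uniqueDiffOn_univ
      (mem_univ (L x)) 2
    simp only [preimage_univ, iteratedFDerivWithin_univ] at h
    rw [show f ∘ L = f ∘ L.toContinuousLinearEquiv from rfl, h]
    simp only [ContinuousMultilinearMap.compContinuousLinearMap_apply, OrthonormalBasis.map_apply]
    congr 1
    ext j
    fin_cases j <;> rfl
  rw [laplacian_eq_iteratedFDeriv_orthonormalBasis _ b,
    laplacian_eq_iteratedFDeriv_orthonormalBasis _ (b.map L)]
  exact Finset.sum_congr rfl fun i _ => hcomp i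

theorem HarmonicAt.comp_linearIsometryEquiv {f : F → G} (L : E ≃ₗᵢ[ℝ] F) {x : E}
    (hf : HarmonicAt f (L x)) : HarmonicAt (f ∘ L) x := by
  refine ⟨hf.1.comp x L.contDiff.contDiffAt, ?_⟩
  have : Δ (f ∘ L) = Δ f ∘ L := funext (laplacian_comp_linearIsometryEquiv L f)
  rw [this]
  exact hf.2.comp_tendsto (L.continuous.tendsto x)

end Isometry

theorem HarmonicOnNhd.harnack_closedBall {f : ℂ → ℝ} {c w : ℂ} {r : ℝ}
    (hf : HarmonicOnNhd f (closedBall c r)) (hnn : ∀ z ∈ sphere c r, 0 ≤ f z)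
    (hw : w ∈ ball c r) : (r - dist w c) * f c ≤ (r + dist w c) * f w := by
  have hr : 0 < r := pos_of_mem_ball hw
  have habs : |r| = r := abs_of_pos hr
  set k := (r - ‖w - c‖) / (r + ‖w - c‖)
  have hkernel : ∀ z ∈ sphere c |r|, k * f z ≤ (poissonKernel c w • f) z := by
    intro z hz
    rw [habs] at hz
    rw [poissonKernel_eq_re_herglotzRieszKernel, Pi.smul_apply', smul_eq_mul, Function.comp_apply,
      herglotzRieszKernel_def]
    exact mul_le_mul_of_nonneg_right (le_re_herglotzRieszKernel hz hw) (hnn z hz)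
  have hf' : HarmonicOnNhd f (closedBall c |r|) := by rwa [habs]
  have hcont : ContinuousOn f (sphere c |r|) := hf'.continuousOn.mono sphere_subset_closedBall
  have hmean : k * f c ≤ f w := calc
    k * f c = circleAverage (k • f) c r := by
      rw [circleAverage_smul, hf'.circleAverage_eq, smul_eq_mul]
    _ ≤ circleAverage (poissonKernel c w • f) c r := by
      apply circleAverage_mono ((continuousOn_const.smul hcont).circleIntegrable') _ hkernel
      rw [poissonKernel_eq_re_herglotzRieszKernel]
      exact ((Complex.continuous_re.comp_continuousOn
        (continuousOn_herglotzRieszKernel_sphere hw)).smul hcont).circleIntegrable'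
    _ = f w := hf.circleAverage_poissonKernel_smul hw
  have hpos : 0 < r + ‖w - c‖ := by positivity
  calc (r - dist w c) * f c = (r + ‖w - c‖) * (k * f c) := by
        simp only [k, dist_eq_norm]; field_simp
    _ ≤ (r + dist w c) * f w := by rw [dist_eq_norm]; gcongr

theorem HarmonicOnNhd.harnack_ball {f : ℂ → ℝ} {c w : ℂ} {R : ℝ}
    (hf : HarmonicOnNhd f (ball c R)) (hnn : ∀ z ∈ ball c R, 0 ≤ f z) (hw : w ∈ ball c R) :
    (R - dist w c) * f c ≤ (R + dist w c) * f w := by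
  have hclosed : IsClosed {r : ℝ | (r - dist w c) * f c ≤ (r + dist w c) * f w} :=
    isClosed_le (by fun_prop) (by fun_prop)
  have hsmaller : Ioo (dist w c) R ⊆ {r : ℝ | (r - dist w c) * f c ≤ (r + dist w c) * f w} :=
    fun r hr => harnack_closedBall (hf.mono (closedBall_subset_ball hr.2))
      (fun z hz => hnn z (sphere_subset_ball hr.2 hz)) hr.1
  apply hclosed.closure_subset_iff.2 hsmaller
  rw [closure_Ioo (mem_ball.1 hw).ne]
  exact right_mem_Icc.2 (mem_ball.1 hw).le

theorem HarmonicOnNhd.harnack_ball_of_linearIsometryEquiv {E : Type*}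
    [NormedAddCommGroup E] [InnerProductSpace ℝ E] [FiniteDimensional ℝ E] (L : ℂ ≃ₗᵢ[ℝ] E)
    {f : E → ℝ} {c w : E} {R : ℝ} (hf : HarmonicOnNhd f (ball c R))
    (hnn : ∀ z ∈ ball c R, 0 ≤ f z) (hw : w ∈ ball c R) :
    (R - dist w c) * f c ≤ (R + dist w c) * f w := by
  have hmaps : ∀ z ∈ ball (L.symm c) R, L z ∈ ball c R := fun z hz => by
    rwa [mem_ball, ← L.dist_map, L.apply_symm_apply] at hz
  have h := harnack_ball (f := f ∘ L)
    (fun z hz => (hf (L z) (hmaps z hz)).comp_linearIsometryEquiv L)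
    (fun z hz => hnn (L z) (hmaps z hz)) (w := L.symm w) (by simpa using hw)
  simpa using h

end InnerProductSpace

theorem lap_eq_laplacian {v : R2 → ℝ} {x : R2} (hv : ContDiffAt ℝ 2 v x) : lap v x = Δ v x := by
  have hv' : DifferentiableAt ℝ (fderiv ℝ v) x :=
    (hv.fderiv_right (m := 1) (by norm_num)).differentiableAt (by norm_num)
  rw [laplacian_eq_iteratedFDeriv_orthonormalBasis v (EuclideanSpace.basisFun (Fin 2) ℝ), lap]
  refine Finset.sum_congr rfl fun i _ => ?_
  unfold pd
  rw [iteratedFDeriv_two_apply, fderiv_clm_apply hv' (differentiableAt_const _)]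
  simp [e]

theorem harmonicOnNhd_of_lap_eq_zero {v : R2 → ℝ} {s : Set R2} (hs : IsOpen s)
    (hreg : ContDiffOn ℝ 2 v s) (hharm : ∀ x ∈ s, lap v x = 0) : HarmonicOnNhd v s := by
  intro x hx
  refine ⟨hreg.contDiffAt (hs.mem_nhds hx), ?_⟩
  filter_upwards [hs.mem_nhds hx] with z hz
  rw [← lap_eq_laplacian (hreg.contDiffAt (hs.mem_nhds hz))]
  exact hharm z hz

theorem inner_grad (u : R2 → ℝ) (x w : R2) : ⟪grad u x, w⟫ = fderiv ℝ u x w := by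
  conv_rhs => rw [← (EuclideanSpace.basisFun (Fin 2) ℝ).sum_repr w]
  simp [grad, pd, e, inner_add_left, inner_smul_left, EuclideanSpace.inner_single_left, mul_comm]

theorem norm_fderiv_le_norm_grad (u : R2 → ℝ) (x : R2) : ‖fderiv ℝ u x‖ ≤ ‖grad u x‖ :=
  ContinuousLinearMap.opNorm_le_bound _ (norm_nonneg _) fun w => by
    rw [← inner_grad, Real.norm_eq_abs]
    exact abs_real_inner_le_norm _ _

theorem DifferentiableAt.eventually_le_add_mul_norm_sub {E : Type*} [NormedAddCommGroup E]
    [NormedSpace ℝ E] {f : E → ℝ} {x₀ : E} (hf : DifferentiableAt ℝ f x₀) {C : ℝ}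
    (hC : ‖fderiv ℝ f x₀‖ < C) : ∀ᶠ x in 𝓝 x₀, f x ≤ f x₀ + C * ‖x - x₀‖ := by
  have hlo := hf.hasFDerivAt.isLittleO.def (sub_pos.2 hC)
  filter_upwards [hlo] with x hx
  have hlin : fderiv ℝ f x₀ (x - x₀) ≤ ‖fderiv ℝ f x₀‖ * ‖x - x₀‖ :=
    (le_abs_self _).trans ((fderiv ℝ f x₀).le_opNorm _)
  rw [Real.norm_eq_abs, abs_le] at hx
  linarith [hx.2]

theorem dist_lineMap_div {E : Type*} [NormedAddCommGroup E] [NormedSpace ℝ E] {a b : E}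
    {d t : ℝ} (hab : dist a b = d) (ht : 0 < t) (htd : t ≤ d) :
    dist (AffineMap.lineMap a b (t / d)) a = t ∧
      dist (AffineMap.lineMap a b (t / d)) b = d - t := by
  have hd : 0 < d := ht.trans_le htd
  rw [dist_lineMap_left, dist_lineMap_right, hab, Real.norm_of_nonneg (by positivity),
    Real.norm_of_nonneg (sub_nonneg.2 ((div_le_one hd).2 htd))]
  constructor <;> field_simp

theorem stmt9_general (d : ℝ) (hd : 0 < d) (y : R2) (v : R2 → ℝ)
    (hreg : ContDiffOn ℝ 2 v (Metric.ball y d))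
    (hharm : ∀ x ∈ Metric.ball y d, lap v x = 0)
    (hnonneg : ∀ x ∈ Metric.ball y d, 0 ≤ v x)
    (z₀ : R2) (hz₀ : ‖z₀ - y‖ = d) (hv0 : v z₀ = 0)
    (hdiff : DifferentiableAt ℝ v z₀) (hgrad : ‖grad v z₀‖ ≤ 1) :
    v y ≤ 3 * d := by
  have hd₀ : dist z₀ y = d := by rwa [dist_eq_norm]
  have hv : HarmonicOnNhd v (ball y d) := harmonicOnNhd_of_lap_eq_zero isOpen_ball hreg hharm
  have hslope : ∀ᶠ x in 𝓝 z₀, v x ≤ 3 / 2 * dist x z₀ := by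
    simpa [hv0, dist_eq_norm] using hdiff.eventually_le_add_mul_norm_sub (C := 3 / 2)
      (by linarith [norm_fderiv_le_norm_grad v z₀])
  let x : ℝ → R2 := fun t => AffineMap.lineMap z₀ y (t / d)
  have hx : Tendsto x (𝓝[>] 0) (𝓝 z₀) := by
    have : Continuous x := (AffineMap.lineMap_continuous).comp (continuous_id.div_const d)
    simpa [x] using (this.tendsto 0).mono_left nhdsWithin_le_nhds
  obtain ⟨t, hxt, ht0, htd⟩ := ((hx.eventually hslope).and (Ioo_mem_nhdsGT hd)).exists
  obtain ⟨hdist_z₀, hdist_y⟩ := dist_lineMap_div hd₀ ht0 htd.le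
  have hharnack := hv.harnack_ball_of_linearIsometryEquiv Complex.orthonormalBasisOneI.repr
    hnonneg (w := x t) (by rw [mem_ball, hdist_y]; linarith)
  rw [hdist_y] at hharnack
  rw [hdist_z₀] at hxt
  have hscaled : t * v y ≤ t * (3 * d) := calc
    t * v y = (d - (d - t)) * v y := by ring
    _ ≤ (d + (d - t)) * v (x t) := hharnack
    _ ≤ (d + (d - t)) * (3 / 2 * t) := by gcongr
    _ ≤ t * (3 * d) := by nlinarith
  exact le_of_mul_le_mul_left hscaled ht0

/-- A nonnegative harmonic function whose gradient is at most one at a boundary zero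
is at most `3 d` at the center. -/
theorem stmt9 (d : ℝ) (hd : 0 < d) (y : R2) (v : R2 → ℝ)
    (hcont : ContinuousOn v (Metric.closedBall y d))
    (hreg : ContDiffOn ℝ 2 v (Metric.ball y d))
    (hharm : ∀ x ∈ Metric.ball y d, lap v x = 0)
    (hnonneg : ∀ x ∈ Metric.ball y d, 0 ≤ v x)
    (z₀ : R2) (hz₀ : ‖z₀ - y‖ = d) (hv0 : v z₀ = 0)
    (hdiff : DifferentiableAt ℝ v z₀) (hgrad : ‖grad v z₀‖ ≤ 1) :
    v y ≤ 3 * d :=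
  stmt9_general d hd y v hreg hharm hnonneg z₀ hz₀ hv0 hdiff hgrad
end
end
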